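/- Let λ : Fˣ → kˣ be a nontrivial group homomorphism, let n ≥ 1, let u₁, …, u_n ∈ Fˣ be pairwise distinct, and let a₁, …, a_n ∈ kˣ. Then the set of x ∈ Fˣ such that x + uᵢ ≠ 0 for all i and a₁λ(x+u₁) + a₂λ(x+u₂) + ⋯ + a_nλ(x+u_n) ≠ 0 is infinite. -/

import Mathlib

open Matrix MonoidAlgebra
open scoped Classical

noncomputable section

variable (p : ℕ) [Fact p.Prime]

abbrev Fbar : Type := AlgebraicClosure (ZMod p)
abbrev SL2 : Type := Matrix.SpecialLinearGroup (Fin 2) (Fbar p)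

def Tgrp : Subgroup (SL2 p) where
  carrier := {g | g.1 0 1 = 0 ∧ g.1 1 0 = 0}
  one_mem' := by simp
  mul_mem' := by
    rintro a b ⟨ha1, ha2⟩ ⟨hb1, hb2⟩
    constructor <;>
      simp [Matrix.mul_apply, Fin.sum_univ_succ, ha1, ha2, hb1, hb2]
  inv_mem' := by
    rintro a ⟨ha1, ha2⟩
    constructor <;>
      simp [Matrix.SpecialLinearGroup.coe_inv, Matrix.adjugate_fin_two, ha1, ha2]

def Ugrp : Subgroup (SL2 p) where
  carrier := {g | g.1 1 0 = 0 ∧ g.1 0 0 = 1 ∧ g.1 1 1 = 1}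
  one_mem' := by simp
  mul_mem' := by
    rintro a b ⟨ha1, ha2, ha3⟩ ⟨hb1, hb2, hb3⟩
    refine ⟨?_, ?_, ?_⟩ <;>
      simp [Matrix.mul_apply, Fin.sum_univ_succ, ha1, ha2, ha3, hb1, hb2, hb3]
  inv_mem' := by
    rintro a ⟨ha1, ha2, ha3⟩
    refine ⟨?_, ?_, ?_⟩ <;>
      simp [Matrix.SpecialLinearGroup.coe_inv, Matrix.adjugate_fin_two, ha1, ha2, ha3]

def Bgrp : Subgroup (SL2 p) where
  carrier := {g | g.1 1 0 = 0}
  one_mem' := by simp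
  mul_mem' := by
    intro a b ha hb
    simp only [Set.mem_setOf_eq] at *
    simp [Matrix.mul_apply, Fin.sum_univ_succ, ha, hb]
  inv_mem' := by
    intro a ha
    simp only [Set.mem_setOf_eq] at *
    simp [Matrix.SpecialLinearGroup.coe_inv, Matrix.adjugate_fin_two, ha]

def Ngrp : Subgroup (SL2 p) := Subgroup.normalizer (Tgrp p : Set (SL2 p))

def eps (x : Fbar p) : SL2 p :=
  ⟨!![1, x; 0, 1], by simp [Matrix.det_fin_two_of]⟩

def sdot : SL2 p :=
  ⟨!![0, 1; -1, 0], by simp [Matrix.det_fin_two_of]⟩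

lemma mem_Tgrp_iff {g : SL2 p} : g ∈ Tgrp p ↔ g.1 0 1 = 0 ∧ g.1 1 0 = 0 := Iff.rfl
lemma mem_Bgrp_iff {g : SL2 p} : g ∈ Bgrp p ↔ g.1 1 0 = 0 := Iff.rfl

/-- The projection `B → T` killing the unipotent radical `U`,
sending an upper triangular matrix to its diagonal part. -/
def diagHom : Bgrp p →* Tgrp p where
  toFun b :=
    ⟨⟨!![b.1.1 0 0, 0; 0, b.1.1 1 1], by
        have hd : b.1.1.det = 1 := b.1.2
        rw [Matrix.det_fin_two] at hd
        have h10 : b.1.1 1 0 = 0 := b.2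
        rw [h10, mul_zero, sub_zero] at hd
        simpa [Matrix.det_fin_two_of] using hd⟩,
     by constructor <;> simp⟩
  map_one' := by
    apply Subtype.ext
    apply Subtype.ext
    simp [Matrix.one_fin_two]
  map_mul' := by
    intro a b
    apply Subtype.ext
    apply Subtype.ext
    rw [Subgroup.coe_mul (Tgrp p), Matrix.SpecialLinearGroup.coe_mul]
    have ha : a.1.1 1 0 = 0 := a.2
    have hb : b.1.1 1 0 = 0 := b.2
    ext i j
    fin_cases i <;> fin_cases j <;>
      simp [Matrix.mul_apply, Fin.sum_univ_succ, ha, hb]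

/-- Conjugation by `ṡ` as an automorphism of `T`:  `t ↦ ṡ⁻¹ t ṡ`. -/
def sConj : Tgrp p →* Tgrp p where
  toFun t :=
    ⟨(sdot p)⁻¹ * (t : SL2 p) * sdot p, by
      have h1 : (t : SL2 p).1 0 1 = 0 := t.2.1
      have h2 : (t : SL2 p).1 1 0 = 0 := t.2.2
      constructor <;>
        simp only [Matrix.SpecialLinearGroup.coe_mul, Matrix.SpecialLinearGroup.coe_inv] <;>
        simp [sdot, Matrix.SpecialLinearGroup.coe_inv, Matrix.adjugate_fin_two,
          Matrix.mul_apply, Matrix.vecMul, dotProduct, Fin.sum_univ_succ, h1, h2]⟩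
  map_one' := by
    apply Subtype.ext
    simp
  map_mul' := by
    intro a b
    apply Subtype.ext
    simp only [Subgroup.coe_mul]
    group

variable (k : Type*) [Field k] [IsAlgClosed k] [CharZero k]

/-- The group algebra `kG`. -/
abbrev GA := MonoidAlgebra k (SL2 p)

/-- The submodule of relations defining `kG ⊗_{kH} k_χ`. -/
def indRel (H : Subgroup (SL2 p)) (χ : H → k) : Submodule (GA p k) (GA p k) :=
  Submodule.span (GA p k)
    {x | ∃ (g : SL2 p) (h : H),
      x = MonoidAlgebra.single (g * (h : SL2 p)) 1 - χ h • MonoidAlgebra.single g 1}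

/-- The induced module `kG ⊗_{kH} k_χ`, realized as a quotient of `kG`. -/
abbrev IndMod (H : Subgroup (SL2 p)) (χ : H → k) : Type _ := GA p k ⧸ indRel p k H χ

/-- The canonical image of `g ⊗ 1` in `kG ⊗_{kH} k_χ`. -/
def indMk (H : Subgroup (SL2 p)) (χ : H → k) (g : SL2 p) : IndMod p k H χ :=
  Submodule.Quotient.mk (MonoidAlgebra.single g 1)

/-- The character value function `B → k` attached to a character `θ` of `T`,
via the projection `B → T`. -/
def charB (θ : Tgrp p →* kˣ) : Bgrp p → k := fun b => θ (diagHom p b)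

/-- `M(θ) = kG ⊗_{kB} k_θ`. -/
abbrev Mθ (θ : Tgrp p →* kˣ) : Type _ := IndMod p k (Bgrp p) (charB p k θ)

/-- The trivial `kG`-module `k_tr`. -/
abbrev Ktriv : Type _ := (Representation.trivial k (G := SL2 p) (V := k)).asModule

/-- The permutation module `k[G/H]`. -/
abbrev PermMod (H : Subgroup (SL2 p)) : Type _ :=
  (Representation.ofMulAction k (SL2 p) (SL2 p ⧸ H)).asModule

/-- The augmentation (sum of coefficients) on `k[G/H]`. -/
def aug (H : Subgroup (SL2 p)) (ξ : PermMod p k H) : k :=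
  ((Representation.ofMulAction k (SL2 p) (SL2 p ⧸ H)).asModuleEquiv ξ).coeff.sum fun _ c => c


/-- Extension of a homomorphism `λ : Fˣ → kˣ` to `F`, by `0` at `0`. -/
def lamExt (lam : (Fbar p)ˣ →* kˣ) : Fbar p → k := fun y =>
  if h : y = 0 then 0 else (lam (Units.mk0 y h) : k)

/-!
Write `f x = ∑ i, aᵢ λ(x + uᵢ)` and suppose its support `S` is finite. Over a finite subfield `E`
containing `S`, the `uᵢ` and a point where `λ ≠ 1`, orthogonality of shifted characters gives
`∑_{x ∈ E} f x · λ⁻¹(x + u_j) = a_j |E| - ∑ i, aᵢ`: the diagonal terms count `|E| - 1`, and each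
cross term is, after an affine substitution, `λ⁻¹(-1) J(λ, λ⁻¹) = -1`. The left side only involves
`x ∈ S`, so `a_j |E|` would be independent of `E`; but every finite subset of `F` lies in finite
subfields of different sizes.
-/

namespace MulChar

section FiniteField

variable {K R : Type*} [Field K] [Fintype K] [CommRing R]

lemma sum_apply_add_mul_inv_apply_add_of_ne [IsDomain R] {χ : MulChar K R} (hχ : χ ≠ 1)
    {u v : K} (huv : u ≠ v) : ∑ x, χ (x + u) * χ⁻¹ (x + v) = -1 := by
  have hw : u - v ≠ 0 := sub_ne_zero.mpr huv
  -- substituting `x = (u - v) t - u` turns the sum into `χ⁻¹(-1) J(χ, χ⁻¹)`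
  have hterm : ∀ t, χ ((u - v) * t - u + u) * χ⁻¹ ((u - v) * t - u + v)
      = χ⁻¹ (-1) * (χ t * χ⁻¹ (1 - t)) := fun t => by
    have h1 : (u - v) * t - u + u = (u - v) * t := by ring
    have h2 : (u - v) * t - u + v = -1 * (u - v) * (1 - t) := by ring
    have hχw : χ (u - v) * χ⁻¹ (u - v) = 1 := by
      rw [← mul_apply, mul_inv_cancel, one_apply (Ne.isUnit hw)]
    rw [h1, h2, map_mul, map_mul, map_mul]
    linear_combination (χ t * χ⁻¹ (-1) * χ⁻¹ (1 - t)) * hχw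
  have hJ := jacobiSum_nontrivial_inv hχ
  unfold jacobiSum at hJ
  rw [← Fintype.sum_equiv ((Equiv.mulLeft₀ _ hw).trans (Equiv.subRight u)) _ _ fun _ => rfl]
  simp only [Equiv.trans_apply, Equiv.subRight_apply, Equiv.mulLeft₀_apply, hterm]
  rw [← Finset.mul_sum, hJ, mul_neg, ← mul_apply, inv_mul, one_apply isUnit_one.neg]

lemma sum_apply_add_mul_inv_apply_add_self (χ : MulChar K R) (u : K) :
    ∑ x, χ (x + u) * χ⁻¹ (x + u) = Fintype.card K - 1 := by
  classical
  simp only [← mul_apply, mul_inv_cancel]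
  rw [Fintype.sum_equiv (Equiv.addRight u) (fun x => (1 : MulChar K R) (x + u)) _ fun _ => rfl,
    sum_one_eq_card_units, Fintype.card_units, Nat.cast_sub Fintype.card_pos, Nat.cast_one]

lemma sum_linearCombination_mul_inv_apply_add [IsDomain R] {ι : Type*} [Fintype ι]
    {χ : MulChar K R} (hχ : χ ≠ 1) {u : ι → K} (hu : Function.Injective u) (a : ι → R) (j : ι) :
    ∑ x, (∑ i, a i * χ (x + u i)) * χ⁻¹ (x + u j) = a j * Fintype.card K - ∑ i, a i := by
  classical
  have hcross : ∀ i, ∑ x, χ (x + u i) * χ⁻¹ (x + u j)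
      = (if i = j then (Fintype.card K : R) else 0) - 1 := fun i => by
    by_cases hij : i = j
    · rw [hij, if_pos rfl, sum_apply_add_mul_inv_apply_add_self]
    · rw [if_neg hij, zero_sub, sum_apply_add_mul_inv_apply_add_of_ne hχ (hu.ne hij)]
  simp only [Finset.sum_mul, mul_assoc]
  rw [Finset.sum_comm]
  simp only [← Finset.mul_sum, hcross, mul_sub, mul_one, Finset.sum_sub_distrib, mul_ite,
    mul_zero, Finset.sum_ite_eq', Finset.mem_univ, if_true]

end FiniteField

section Subfield

variable {F R : Type*} [Field F] [CommRing R]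

lemma domRestrict_subfield_apply (E : Subfield F) (χ : MulChar F R) (x : E) :
    χ.domRestrict E x = χ x := by
  rw [domRestrict_apply]
  split_ifs with hx
  · rfl
  · rw [isUnit_iff_ne_zero, not_not] at hx
    rw [hx, ZeroMemClass.coe_zero, χ.map_zero]

lemma sum_subfield_linearCombination_mul_inv_apply_add [IsDomain R] {ι : Type*} [Fintype ι]
    (E : Subfield F) [Fintype E] {χ : MulChar F R} (hχ : χ.domRestrict E ≠ 1) {u : ι → F}
    (hu : Function.Injective u) (huE : ∀ i, u i ∈ E) (a : ι → R) (j : ι) :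
    ∑ x : E, (∑ i, a i * χ (x + u i)) * χ⁻¹ (x + u j) = a j * Fintype.card E - ∑ i, a i := by
  have hinv : (χ.domRestrict E)⁻¹ = χ⁻¹.domRestrict E := (map_inv (domRestrictHom E R) χ).symm
  rw [← sum_linearCombination_mul_inv_apply_add hχ (u := fun i => (⟨u i, huE i⟩ : E))
    (fun i i' h => hu (congrArg Subtype.val h)) a j, hinv]
  simp only [domRestrict_subfield_apply, Subfield.coe_add]

theorem infinite_setOf_sum_mul_apply_add_ne_zero [IsDomain R] [CharZero R] [Infinite F]
    (hF : ∀ s : Set F, s.Finite → ∃ E : Subfield F, s ⊆ E ∧ Finite E) {χ : MulChar F R}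
    (hχ : χ ≠ 1) {ι : Type*} [Fintype ι] {u : ι → F} (hu : Function.Injective u) {a : ι → R}
    (ha : a ≠ 0) : {x | ∑ i, a i * χ (x + u i) ≠ 0}.Infinite := by
  intro hS
  obtain ⟨ξ, hξ⟩ := ne_one_iff.mp hχ
  obtain ⟨j, hj⟩ := Function.ne_iff.mp ha
  set S := {x | ∑ i, a i * χ (x + u i) ≠ 0}
  set T := S ∪ insert (ξ : F) (Set.range u)
  have hT : T.Finite := hS.union ((Set.finite_range u).insert _)
  -- the orthogonality sum over a finite subfield containing `T` only sees the points of `S`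
  have hcard : ∀ (E : Subfield F) [Fintype E], T ⊆ E →
      a j * Fintype.card E = ∑ x ∈ hS.toFinset, (∑ i, a i * χ (x + u i)) * χ⁻¹ (x + u j)
        + ∑ i, a i := by
    intro E _ hTE
    have hχE : χ.domRestrict E ≠ 1 := by
      refine ne_one_iff.mpr ⟨Units.mk0 ⟨ξ, hTE (by simp [T])⟩
        fun h => ξ.ne_zero (congrArg Subtype.val h), ?_⟩
      rwa [Units.val_mk0, domRestrict_subfield_apply]
    rw [← sub_eq_iff_eq_add, ← sum_subfield_linearCombination_mul_inv_apply_add E hχE hu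
      (fun i => hTE (by simp [T])),
      ← Finset.sum_subtype (E : Set F).toFinset (p := (· ∈ E))
        (fun x => Set.mem_toFinset.trans SetLike.mem_coe)
        fun x => (∑ i, a i * χ (x + u i)) * χ⁻¹ (x + u j)]
    refine (Finset.sum_subset (fun x hx => ?_) fun x _ hx => ?_).symm
    · simpa using hTE (Or.inl ((Set.Finite.mem_toFinset hS).mp hx))
    · rw [Set.Finite.mem_toFinset, Set.mem_ofPred_eq, not_not] at hx
      rw [hx, zero_mul]
  obtain ⟨E, hTE, hE⟩ := hF T hT
  obtain ⟨w, hw⟩ := (Set.toFinite (E : Set F)).exists_notMem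
  obtain ⟨E', hE'sub, hE'⟩ := hF _ ((Set.toFinite (E : Set F)).insert w)
  have hle : E ≤ E' := fun x hx => hE'sub (Set.mem_insert_of_mem _ hx)
  have : Fintype E := Fintype.ofFinite E
  have : Fintype E' := Fintype.ofFinite E'
  have hlt : Fintype.card E < Fintype.card E' := by
    refine Fintype.card_lt_of_injective_not_surjective (Subfield.inclusion hle)
      (Subfield.inclusion hle).injective fun hsurj => hw ?_
    obtain ⟨x, hx⟩ := hsurj ⟨w, hE'sub (Set.mem_insert w _)⟩
    have hxw : (x : F) = w := congrArg Subtype.val hx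
    exact hxw ▸ x.2
  have heq := (hcard E hTE).trans (hcard E' (hTE.trans hle)).symm
  exact hlt.ne (Nat.cast_injective (mul_left_cancel₀ hj heq))

end Subfield

end MulChar

lemma exists_finite_subfield_superset {K F : Type*} [Field K] [Finite K] [Field F] [Algebra K F]
    [Algebra.IsAlgebraic K F] (s : Set F) (hs : s.Finite) :
    ∃ E : Subfield F, s ⊆ E ∧ Finite E := by
  have : Finite s := hs.to_subtype
  have : FiniteDimensional K (IntermediateField.adjoin K s) :=
    IntermediateField.finiteDimensional_adjoin fun x _ =>
      (Algebra.IsAlgebraic.isAlgebraic x).isIntegral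
  exact ⟨(IntermediateField.adjoin K s).toSubfield, IntermediateField.subset_adjoin K s,
    show Finite (IntermediateField.adjoin K s) from Module.finite_of_finite K⟩

omit [IsAlgClosed k] [CharZero k] in
lemma lamExt_eq_ofUnitHom (lam : (Fbar p)ˣ →* kˣ) : lamExt p k lam = MulChar.ofUnitHom lam := by
  funext y
  by_cases hy : y = 0
  · rw [hy, MulChar.map_zero]
    exact dif_pos rfl
  · rw [← Units.val_mk0 hy, MulChar.ofUnitHom_coe]
    exact dif_neg hy

/-- For a nontrivial homomorphism `λ : Fˣ → kˣ`, `n ≥ 1`, pairwise distinct `u₁, …, u_n ∈ Fˣ`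
and `a₁, …, a_n ∈ kˣ`, there are infinitely many `x ∈ Fˣ` such that all `x + uᵢ ≠ 0` and
`a₁ λ(x+u₁) + ⋯ + a_n λ(x+u_n) ≠ 0`. -/
theorem statement4 (lam : (Fbar p)ˣ →* kˣ) (hlam : lam ≠ 1) (n : ℕ) (hn : 1 ≤ n)
    (u : Fin n → (Fbar p)ˣ) (hu : Function.Injective u) (a : Fin n → kˣ) :
    {x : (Fbar p)ˣ |
      (∀ i, (x : Fbar p) + (u i : Fbar p) ≠ 0) ∧
      ∑ i, (a i : k) * lamExt p k lam ((x : Fbar p) + (u i : Fbar p)) ≠ 0}.Infinite := by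
  have hχ : MulChar.ofUnitHom lam ≠ 1 := by
    obtain ⟨x, hx⟩ := DFunLike.ne_iff.mp hlam
    exact MulChar.ne_one_iff.mpr ⟨x, by rwa [MulChar.ofUnitHom_coe, Ne, Units.val_eq_one]⟩
  have ha : (fun i => (a i : k)) ≠ 0 := Function.ne_iff.mpr ⟨⟨0, hn⟩, (a _).ne_zero⟩
  have hsupp := MulChar.infinite_setOf_sum_mul_apply_add_ne_zero
    (exists_finite_subfield_superset (K := ZMod p)) hχ (Units.val_injective.comp hu) ha
  rw [← lamExt_eq_ofUnitHom] at hsupp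
  refine Set.Infinite.of_image Units.val
    ((hsupp.sdiff ((Set.finite_range fun i => -(u i : Fbar p)).insert 0)).mono ?_)
  rintro x ⟨hx, hxu⟩
  simp only [Set.mem_insert_iff, Set.mem_range, not_or, not_exists] at hxu
  refine ⟨Units.mk0 x hxu.1, ⟨fun i h => hxu.2 i ?_, hx⟩, rfl⟩
  exact (eq_neg_of_add_eq_zero_left h).symm

end
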